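/- Let G be a finite connected simple graph on n ≥ 2 vertices whose resistance curvature satisfies K ≤ κ_i ≤ K₂ for all vertices i, with K > 0. Then the Kirchhoff index Kf(G) = Σ_{i<j} Ω_{ij} satisfies n/(2K₂) ≤ Kf(G) ≤ n/(2K). -/

import Mathlib

/-!
Summing the rows of `Ω κ = 1` gives `∑_{i,j} Ω i j κ j = n`. Effective resistances are
nonnegative, because `Γ⁻¹` is positive semidefinite along with `Γ`, and `Ω` is symmetric with
zero diagonal, so `∑_{i,j} Ω i j = 2 Kf(G)`. Bounding `κ j` between `K` and `K₂` in that sum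
gives `2 K Kf(G) ≤ n ≤ 2 K₂ Kf(G)`.
-/

open Finset SimpleGraph Matrix

/-- The resistance matrix of a graph: `Ω i j = Γ⁻¹ i i + Γ⁻¹ j j - 2 Γ⁻¹ i j`
where `Γ = L + (1/n) J` with `L` the Laplacian and `J` the all-ones matrix. -/
noncomputable def resistanceMatrix {V : Type*} [Fintype V] [DecidableEq V]
    (G : SimpleGraph V) [DecidableRel G.Adj] : Matrix V V ℝ :=
  Matrix.of fun i j =>
    letI Γinv := (G.lapMatrix ℝ + Matrix.of fun _ _ => (1 : ℝ) / Fintype.card V)⁻¹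
    Γinv i i + Γinv j j - 2 * Γinv i j

theorem Finset.two_mul_sum_sum_Ioi_eq_sum_sum {α M : Type*} [LinearOrder α] [Fintype α]
    [LocallyFiniteOrderTop α] [LocallyFiniteOrderBot α] [NonAssocSemiring M]
    (f : α → α → M) (hf : ∀ i j, f i j = f j i) (hdiag : ∀ i, f i i = 0) :
    2 * ∑ i, ∑ j ∈ Ioi i, f i j = ∑ i, ∑ j, f i j := by
  classical
  calc 2 * ∑ i, ∑ j ∈ Ioi i, f i j = ∑ i, ∑ j ∈ Ioi i, (f j i + f i j) := by
        simp only [mul_sum, two_mul, hf]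
    _ = ∑ i, ∑ j ∈ {i}ᶜ, f j i := sum_sum_Ioi_add_eq_sum_sum_off_diag f
    _ = ∑ i, ∑ j, f j i := by
        refine sum_congr rfl fun i _ => ?_
        rw [compl_eq_univ_sdiff, ← erase_eq]
        exact sum_erase _ (hdiag i)
    _ = ∑ i, ∑ j, f i j := sum_comm

theorem Matrix.posSemidef_const_of_nonneg {n : Type*} [Fintype n] {c : ℝ} (hc : 0 ≤ c) :
    (Matrix.of fun _ _ : n => c).PosSemidef := by
  have h : (Matrix.of fun _ _ : n => c) = c • vecMulVec (fun _ => 1) (star fun _ => 1) := by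
    ext i j
    simp [vecMulVec]
  rw [h]
  exact (posSemidef_vecMulVec_self_star _).smul hc

theorem Matrix.PosSemidef.diag_add_diag_sub_two_mul_nonneg {n : Type*} [Fintype n]
    [DecidableEq n] {M : Matrix n n ℝ} (hM : M.PosSemidef) (i j : n) :
    0 ≤ M i i + M j j - 2 * M i j := by
  have h := hM.dotProduct_mulVec_nonneg (Pi.single i 1 - Pi.single j 1)
  have hji : M j i = M i j := hM.isHermitian.apply i j
  simp only [star_trivial, mulVec_sub, mulVec_single_one, sub_dotProduct, dotProduct_sub,
    single_one_dotProduct, col_apply, hji] at h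
  linarith

section resistance

variable {V : Type*} [Fintype V] [DecidableEq V] (G : SimpleGraph V) [DecidableRel G.Adj]

theorem SimpleGraph.posSemidef_lapMatrix_add_const {c : ℝ} (hc : 0 ≤ c) :
    (G.lapMatrix ℝ + Matrix.of fun _ _ => c).PosSemidef :=
  (G.posSemidef_lapMatrix ℝ).add (posSemidef_const_of_nonneg hc)

theorem resistanceMatrix_nonneg (i j : V) : 0 ≤ resistanceMatrix G i j :=
  (G.posSemidef_lapMatrix_add_const (by positivity)).inv.diag_add_diag_sub_two_mul_nonneg i j

theorem resistanceMatrix_comm (i j : V) : resistanceMatrix G i j = resistanceMatrix G j i := by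
  have h := (G.posSemidef_lapMatrix_add_const
    (c := 1 / Fintype.card V) (by positivity)).inv.isHermitian.apply i j
  simp only [star_trivial] at h
  simp only [resistanceMatrix, of_apply, h]
  ring

theorem resistanceMatrix_self (i : V) : resistanceMatrix G i i = 0 := by
  simp only [resistanceMatrix, of_apply]
  ring

end resistance

section curvature

variable {V : Type*} [Fintype V] {Ω : Matrix V V ℝ} {κ : V → ℝ}

theorem sum_sum_mul_eq_card_of_mulVec_eq_one (hκ : Ω *ᵥ κ = fun _ => 1) :
    ∑ i, ∑ j, Ω i j * κ j = Fintype.card V := by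
  simpa [mulVec, dotProduct] using congr_arg (fun v => ∑ i, v i) hκ

theorem mul_sum_sum_le_card (hΩ : ∀ i j, 0 ≤ Ω i j) (hκ : Ω *ᵥ κ = fun _ => 1) {K : ℝ}
    (hK : ∀ i, K ≤ κ i) : K * ∑ i, ∑ j, Ω i j ≤ Fintype.card V := by
  rw [← sum_sum_mul_eq_card_of_mulVec_eq_one hκ, mul_sum]
  refine sum_le_sum fun i _ => ?_
  rw [mul_sum]
  refine sum_le_sum fun j _ => ?_
  rw [mul_comm K]
  exact mul_le_mul_of_nonneg_left (hK j) (hΩ i j)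

theorem card_le_mul_sum_sum (hΩ : ∀ i j, 0 ≤ Ω i j) (hκ : Ω *ᵥ κ = fun _ => 1) {K : ℝ}
    (hK : ∀ i, κ i ≤ K) : Fintype.card V ≤ K * ∑ i, ∑ j, Ω i j := by
  rw [← sum_sum_mul_eq_card_of_mulVec_eq_one hκ, mul_sum]
  refine sum_le_sum fun i _ => ?_
  rw [mul_sum]
  refine sum_le_sum fun j _ => ?_
  rw [mul_comm K]
  exact mul_le_mul_of_nonneg_left (hK j) (hΩ i j)

end curvature

theorem kirchhoffIndex_bounds_of_curvature_bounds_general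
    (n : ℕ) (hn : 2 ≤ n)
    (G : SimpleGraph (Fin n)) [DecidableRel G.Adj]
    (κ : Fin n → ℝ) (hκ : resistanceMatrix G *ᵥ κ = fun _ => 1)
    (K K₂ : ℝ) (hK : 0 < K) (hcurv : ∀ i, K ≤ κ i ∧ κ i ≤ K₂) :
    (n : ℝ) / (2 * K₂) ≤ ∑ i, ∑ j ∈ Finset.Ioi i, resistanceMatrix G i j ∧
    ∑ i, ∑ j ∈ Finset.Ioi i, resistanceMatrix G i j ≤ (n : ℝ) / (2 * K) := by
  have hK₂ : 0 < K₂ := hK.trans_le ((hcurv ⟨0, by omega⟩).1.trans (hcurv _).2)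
  have hsum := two_mul_sum_sum_Ioi_eq_sum_sum _ (resistanceMatrix_comm G)
    (resistanceMatrix_self G)
  have hupper := mul_sum_sum_le_card (resistanceMatrix_nonneg G) hκ fun i => (hcurv i).1
  have hlower := card_le_mul_sum_sum (resistanceMatrix_nonneg G) hκ fun i => (hcurv i).2
  rw [Fintype.card_fin, ← hsum] at hupper hlower
  constructor
  · rw [div_le_iff₀ (by positivity)]
    linarith
  · rw [le_div_iff₀ (by positivity)]
    linarith

/-- Two-sided bound on the Kirchhoff index `Kf(G) = ∑_{i<j} Ω i j` for a graph with
resistance curvature between `K > 0` and `K₂`: `n/(2 K₂) ≤ Kf(G) ≤ n/(2 K)`. -/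
theorem kirchhoffIndex_bounds_of_curvature_bounds
    (n : ℕ) (hn : 2 ≤ n)
    (G : SimpleGraph (Fin n)) [DecidableRel G.Adj]
    (hconn : G.Connected)
    (κ : Fin n → ℝ) (hκ : resistanceMatrix G *ᵥ κ = fun _ => 1)
    (K K₂ : ℝ) (hK : 0 < K) (hcurv : ∀ i, K ≤ κ i ∧ κ i ≤ K₂) :
    (n : ℝ) / (2 * K₂) ≤ ∑ i, ∑ j ∈ Finset.Ioi i, resistanceMatrix G i j ∧
    ∑ i, ∑ j ∈ Finset.Ioi i, resistanceMatrix G i j ≤ (n : ℝ) / (2 * K) :=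
  kirchhoffIndex_bounds_of_curvature_bounds_general n hn G κ hκ K K₂ hK hcurv
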